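/- arXiv:1903.03849 — 3 statements merged into one kernel-verified Lean document; each statement's English description precedes it below -/
import Mathlib

section
/- Let A be a real n×n Metzler matrix whose characteristic polynomial has all coefficients strictly positive. Then every complex eigenvalue of A has negative real part. -/
open Matrix Polynomial

def specC {n : ℕ} (A : Matrix (Fin n) (Fin n) ℝ) : Set ℂ :=
  spectrum ℂ (A.map (algebraMap ℝ ℂ))

namespace Stmt6Aux

attribute [local instance] Matrix.linftyOpNormedRing Matrix.linftyOpNormedAlgebra

variable {n : ℕ}

abbrev Mx (n : ℕ) := Matrix (Fin n) (Fin n) ℝ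

lemma entry_le_norm (M : Mx n) (i j : Fin n) : |M i j| ≤ ‖M‖ := by
  have h1 : ‖M i j‖₊ ≤ ‖M‖₊ := by
    rw [Matrix.linfty_opNNNorm_def]
    refine le_trans ?_ (Finset.le_sup (Finset.mem_univ i))
    exact Finset.single_le_sum (f := fun k => ‖M i k‖₊) (fun k _ => zero_le)
      (Finset.mem_univ j)
  exact_mod_cast h1

lemma mul_entry_nonneg {M N : Mx n} (hM : ∀ i j, 0 ≤ M i j) (hN : ∀ i j, 0 ≤ N i j) :
    ∀ i j, 0 ≤ (M * N) i j := by
  intro i j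
  rw [Matrix.mul_apply]
  exact Finset.sum_nonneg fun k _ => mul_nonneg (hM i k) (hN k j)

lemma pow_entry_nonneg {M : Mx n} (hM : ∀ i j, 0 ≤ M i j) :
    ∀ k i j, 0 ≤ (M ^ k) i j := by
  intro k
  induction k with
  | zero =>
      intro i j
      rw [pow_zero]
      by_cases h : i = j <;> simp [Matrix.one_apply, h]
  | succ m ih =>
      rw [pow_succ]
      exact mul_entry_nonneg ih hM

lemma neumann {C : Mx n} (hC : ∀ i j, 0 ≤ C i j) (h : ‖C‖ < 1) :
    ∀ i j, 0 ≤ (1 - C)⁻¹ i j := by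
  intro i j
  rw [Matrix.nonsing_inv_eq_ringInverse]
  have hs := hasSum_geom_series_inverse C h
  let f : Mx n →+ ℝ := AddMonoidHom.mk' (fun M => M i j) (fun _ _ => rfl)
  have hf : Continuous f :=
    AddMonoidHomClass.continuous_of_bound f 1 (fun M => by
      rw [one_mul]; exact entry_le_norm M i j)
  have hev : HasSum (fun k => (C ^ k) i j) ((Ring.inverse (1 - C)) i j) := hs.map f hf
  exact hasSum_le (fun k => pow_entry_nonneg hC k i j) hasSum_zero hev

lemma eval_charpoly (A : Mx n) (s : ℝ) :
    A.charpoly.eval s = (s • (1 : Mx n) - A).det := by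
  rw [Matrix.charpoly, ← Polynomial.coe_evalRingHom, RingHom.map_det]
  congr 1
  ext i j
  by_cases h : i = j <;>
    simp [h, Matrix.charmatrix_apply, Matrix.one_apply, Matrix.diagonal_apply]

lemma charpoly_eval_pos (A : Mx n) (hn : 1 ≤ n) (hcoeff : ∀ k < n, 0 < A.charpoly.coeff k)
    {s : ℝ} (hs : 0 ≤ s) : 0 < A.charpoly.eval s := by
  have : Nontrivial (Fin n) → True := fun _ => trivial
  have hdeg : A.charpoly.natDegree = n := by
    simpa using A.charpoly_natDegree_eq_dim
  rw [Polynomial.eval_eq_sum_range, hdeg]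
  refine Finset.sum_pos' (fun k hk => ?_) ⟨0, ?_, ?_⟩
  · rcases lt_or_eq_of_le (Nat.lt_succ_iff.mp (Finset.mem_range.mp hk)) with h | h
    · exact mul_nonneg (le_of_lt (hcoeff k h)) (pow_nonneg hs k)
    · have : A.charpoly.coeff k = 1 := by
        subst h
        have h2 := A.charpoly_monic.coeff_natDegree
        rwa [hdeg] at h2
      rw [this, one_mul]
      exact pow_nonneg hs k
  · exact Finset.mem_range.mpr (Nat.succ_pos n)
  · simpa using hcoeff 0 hn

lemma det_unit (A : Mx n) {s : ℝ} (hpos : 0 < (s • (1 : Mx n) - A).det) :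
    IsUnit (s • (1 : Mx n) - A).det :=
  isUnit_iff_ne_zero.mpr (ne_of_gt hpos)

/-- Key resolvent-positivity lemma: for a Metzler matrix whose shifted determinants
are positive on `[0, ∞)`, the resolvent `(s•1 - A)⁻¹` is entrywise nonnegative
for all `s ≥ 0`. -/
lemma resolvent_nonneg (A : Mx n) (hn : 1 ≤ n)
    (hpos : ∀ s : ℝ, 0 ≤ s → 0 < (s • (1 : Mx n) - A).det)
    (hMetzler : ∀ i j, i ≠ j → 0 ≤ A i j) :
    ∀ s : ℝ, 0 ≤ s → ∀ i j, 0 ≤ (s • (1 : Mx n) - A)⁻¹ i j := by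
  classical
  -- the shift constant
  set c : ℝ := ∑ i, |A i i| with hc_def
  have hc : 0 ≤ c := Finset.sum_nonneg fun i _ => abs_nonneg _
  set B : Mx n := A + c • 1 with hB_def
  have hB : ∀ i j, 0 ≤ B i j := by
    intro i j
    by_cases h : i = j
    · subst h
      have h1 : |A i i| ≤ c := Finset.single_le_sum (fun k _ => abs_nonneg (A k k))
        (Finset.mem_univ i)
      have : B i i = A i i + c := by simp [hB_def, Matrix.one_apply]
      rw [this]
      have := neg_abs_le (A i i)
      linarith
    · have : B i j = A i j := by simp [hB_def, Matrix.one_apply_ne h]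
      rw [this]
      exact hMetzler i j h
  have hfac : ∀ s : ℝ, s • (1 : Mx n) - A = (s + c) • (1 : Mx n) - B := by
    intro s
    rw [hB_def, add_smul]
    abel
  -- base case : s ≥ ‖B‖ + 1
  have base : ∀ s : ℝ, ‖B‖ < s + c → ∀ i j, 0 ≤ (s • (1 : Mx n) - A)⁻¹ i j := by
    intro s hs i j
    have ht : (0:ℝ) < s + c := lt_of_le_of_lt (norm_nonneg B) hs
    have ht' : s + c ≠ 0 := ne_of_gt ht
    set C : Mx n := (s + c)⁻¹ • B with hC_def
    have hCnn : ∀ i j, 0 ≤ C i j := by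
      intro i j
      have : C i j = (s + c)⁻¹ * B i j := rfl
      rw [this]
      exact mul_nonneg (inv_nonneg.mpr (le_of_lt ht)) (hB i j)
    have hCnorm : ‖C‖ < 1 := by
      rw [hC_def, norm_smul, Real.norm_eq_abs, abs_of_pos (inv_pos.mpr ht)]
      rw [inv_mul_lt_iff₀ ht, mul_one]
      exact hs
    have hfac2 : s • (1 : Mx n) - A = (s + c) • ((1 : Mx n) - C) := by
      rw [hfac s, hC_def, smul_sub, smul_smul, mul_inv_cancel₀ ht', one_smul]
    have hdetu : IsUnit ((1 : Mx n) - C).det :=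
      (Matrix.isUnit_iff_isUnit_det _).mp (isUnit_one_sub_of_norm_lt_one hCnorm)
    have hinv : (s • (1 : Mx n) - A)⁻¹ = (s + c)⁻¹ • ((1 : Mx n) - C)⁻¹ := by
      rw [hfac2]
      apply Matrix.inv_eq_left_inv
      rw [Matrix.smul_mul, Matrix.mul_smul, smul_smul, inv_mul_cancel₀ ht',
        one_smul, Matrix.nonsing_inv_mul _ hdetu]
    rw [hinv]
    have : ((s + c)⁻¹ • ((1 : Mx n) - C)⁻¹) i j = (s + c)⁻¹ * ((1 : Mx n) - C)⁻¹ i j := rfl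
    rw [this]
    exact mul_nonneg (inv_nonneg.mpr (le_of_lt ht)) (neumann hCnn hCnorm i j)
  set s₀ : ℝ := ‖B‖ + 1 with hs₀_def
  have hs₀ : 0 < s₀ := lt_of_le_of_lt (norm_nonneg B) (lt_add_one _)
  -- uniform bound on the resolvent over [0, s₀]
  set g : ℝ → Mx n := fun s => Ring.inverse (s • (1 : Mx n) - A) with hg_def
  have hgR : ∀ s : ℝ, (s • (1 : Mx n) - A)⁻¹ = g s := fun s =>
    Matrix.nonsing_inv_eq_ringInverse _
  have hgcont : ContinuousOn g (Set.Icc 0 s₀) := by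
    intro s hs
    have hu : IsUnit (s • (1 : Mx n) - A) :=
      (Matrix.isUnit_iff_isUnit_det _).mpr (det_unit A (hpos s hs.1))
    obtain ⟨u, hu⟩ := hu
    have h1 : Continuous fun s : ℝ => s • (1 : Mx n) - A :=
      (continuous_id.smul continuous_const).sub continuous_const
    have h2 : ContinuousAt (Ring.inverse : Mx n → Mx n) (s • (1 : Mx n) - A) := by
      rw [← hu]
      exact NormedRing.inverse_continuousAt u
    have h3 : ContinuousAt (fun t : ℝ => Ring.inverse (t • (1 : Mx n) - A)) s :=
      ContinuousAt.comp (g := (Ring.inverse : Mx n → Mx n))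
        (f := fun t : ℝ => t • (1 : Mx n) - A) (x := s) h2 h1.continuousAt
    exact h3.continuousWithinAt
  obtain ⟨z, hz, hzmax⟩ := isCompact_Icc.exists_isMaxOn
    (Set.nonempty_Icc.mpr (le_of_lt hs₀)) (continuous_norm.comp_continuousOn hgcont)
  set K : ℝ := ‖g z‖ with hK_def
  have hK0 : 0 ≤ K := norm_nonneg _
  set δ : ℝ := (K + 1)⁻¹ with hδ_def
  have hδ : 0 < δ := inv_pos.mpr (by linarith)
  -- single Neumann step downwards
  have step : ∀ s s₁ : ℝ, 0 ≤ s → s ≤ s₁ → s₁ ≤ s₀ → s₁ - s ≤ δ →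
      (∀ i j, 0 ≤ (s₁ • (1 : Mx n) - A)⁻¹ i j) →
      ∀ i j, 0 ≤ (s • (1 : Mx n) - A)⁻¹ i j := by
    intro s s₁ hs hss₁ hs₁s₀ hdiff hR₁
    set R₁ : Mx n := (s₁ • (1 : Mx n) - A)⁻¹ with hR₁_def
    have hs₁0 : 0 ≤ s₁ := le_trans hs hss₁
    have hdet₁ : IsUnit (s₁ • (1 : Mx n) - A).det := det_unit A (hpos s₁ hs₁0)
    have hnormR₁ : ‖R₁‖ ≤ K := by
      rw [hR₁_def, hgR]
      exact hzmax ⟨hs₁0, hs₁s₀⟩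
    set d : ℝ := s₁ - s with hd_def
    have hd0 : 0 ≤ d := by simp [hd_def]; linarith
    set C : Mx n := d • R₁ with hC_def
    have hCnn : ∀ i j, 0 ≤ C i j := by
      intro i j
      have : C i j = d * R₁ i j := rfl
      rw [this]
      exact mul_nonneg hd0 (hR₁ i j)
    have hCnorm : ‖C‖ < 1 := by
      rw [hC_def, norm_smul, Real.norm_eq_abs, abs_of_nonneg hd0]
      calc d * ‖R₁‖ ≤ δ * K := by
            apply mul_le_mul hdiff hnormR₁ (norm_nonneg _) (le_of_lt hδ)
        _ < 1 := by
            rw [hδ_def, inv_mul_eq_div, div_lt_one (by linarith)]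
            linarith
    have hfac2 : s • (1 : Mx n) - A = (s₁ • (1 : Mx n) - A) * ((1 : Mx n) - C) := by
      rw [mul_sub, mul_one, hC_def, mul_smul_comm, Matrix.mul_nonsing_inv _ hdet₁, hd_def,
        sub_smul]
      abel
    rw [hfac2, Matrix.mul_inv_rev]
    exact mul_entry_nonneg (neumann hCnn hCnorm) hR₁
  -- descent by induction
  have descent : ∀ m : ℕ, ∀ s : ℝ, 0 ≤ s → s₀ - s ≤ (m : ℝ) * δ →
      ∀ i j, 0 ≤ (s • (1 : Mx n) - A)⁻¹ i j := by
    intro m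
    induction m with
    | zero =>
        intro s hs h
        apply base
        simp only [Nat.cast_zero, zero_mul] at h
        have : s₀ ≤ s := by linarith
        rw [hs₀_def] at this
        linarith
    | succ m ih =>
        intro s hs h
        by_cases hcase : s₀ ≤ s
        · apply base
          rw [hs₀_def] at hcase
          linarith
        · push_neg at hcase
          set s₁ : ℝ := min (s + δ) s₀ with hs₁_def
          have hss₁ : s ≤ s₁ := le_min (by linarith) (le_of_lt hcase)
          have hs₁s₀ : s₁ ≤ s₀ := min_le_right _ _
          have hdiff : s₁ - s ≤ δ := by
            have := min_le_left (s + δ) s₀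
            rw [hs₁_def]
            linarith [min_le_left (s + δ) s₀]
          have hprev : s₀ - s₁ ≤ (m : ℝ) * δ := by
            rcases le_or_gt (s + δ) s₀ with hle | hlt
            · have : s₁ = s + δ := min_eq_left hle
              rw [this]
              push_cast at h
              linarith
            · have : s₁ = s₀ := min_eq_right (le_of_lt hlt)
              rw [this]
              simp only [sub_self]
              positivity
          exact step s s₁ hs hss₁ hs₁s₀ hdiff (ih s₁ (le_trans hs hss₁) hprev)
  intro s hs
  obtain ⟨m, hm⟩ := exists_nat_ge ((s₀ - s) / δ)
  have : s₀ - s ≤ (m : ℝ) * δ := by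
    rw [div_le_iff₀ hδ] at hm
    linarith
  exact descent m s hs this

end Stmt6Aux

open Stmt6Aux in
theorem stmt6 {n : ℕ} (hn : 1 ≤ n) (A : Matrix (Fin n) (Fin n) ℝ)
    (hMetzler : ∀ i j, i ≠ j → 0 ≤ A i j)
    (hcoeff : ∀ k < n, 0 < A.charpoly.coeff k) :
    ∀ μ ∈ specC A, μ.re < 0 := by
  classical
  intro μ hμ
  by_contra hre
  push_neg at hre
  set a : ℝ := μ.re with ha_def
  -- positivity of shifted determinants
  have hpos : ∀ s : ℝ, 0 ≤ s → 0 < (s • (1 : Mx n) - A).det := by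
    intro s hs
    rw [← eval_charpoly]
    exact charpoly_eval_pos A hn hcoeff hs
  -- get an eigenvector
  set A' : Matrix (Fin n) (Fin n) ℂ := A.map (algebraMap ℝ ℂ) with hA'_def
  have hnu : ¬IsUnit (algebraMap ℂ (Matrix (Fin n) (Fin n) ℂ) μ - A') :=
    spectrum.mem_iff.mp hμ
  have hdet0 : (algebraMap ℂ (Matrix (Fin n) (Fin n) ℂ) μ - A').det = 0 := by
    by_contra hne
    exact hnu ((Matrix.isUnit_iff_isUnit_det _).mpr (isUnit_iff_ne_zero.mpr hne))
  obtain ⟨v, hv0, hveq⟩ := (Matrix.exists_mulVec_eq_zero_iff).mpr hdet0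
  have heig : ∀ i, μ * v i = ∑ j, (algebraMap ℝ ℂ (A i j)) * v j := by
    intro i
    have h1 := congrFun hveq i
    rw [Matrix.sub_mulVec] at h1
    have h2 : (algebraMap ℂ (Matrix (Fin n) (Fin n) ℂ) μ) *ᵥ v = μ • v := by
      rw [Algebra.algebraMap_eq_smul_one, Matrix.smul_mulVec, Matrix.one_mulVec]
    rw [h2] at h1
    have h3 : (μ • v - A' *ᵥ v) i = 0 := h1
    have h4 : μ * v i = (A' *ᵥ v) i := sub_eq_zero.mp h3
    rw [h4, Matrix.mulVec, dotProduct]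
    rfl
  -- the absolute-value vector
  set x : Fin n → ℝ := fun i => ‖v i‖ with hx_def
  have hxnn : ∀ i, 0 ≤ x i := fun i => norm_nonneg _
  -- shift constant
  set c : ℝ := ∑ i, |A i i| with hc_def
  have hc : 0 ≤ c := Finset.sum_nonneg fun i _ => abs_nonneg _
  set B : Mx n := A + c • 1 with hB_def
  have hB : ∀ i j, 0 ≤ B i j := by
    intro i j
    by_cases h : i = j
    · subst h
      have h1 : |A i i| ≤ c := Finset.single_le_sum (fun k _ => abs_nonneg (A k k))
        (Finset.mem_univ i)
      have : B i i = A i i + c := by simp [hB_def, Matrix.one_apply]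
      rw [this]
      have := neg_abs_le (A i i)
      linarith
    · have : B i j = A i j := by simp [hB_def, Matrix.one_apply_ne h]
      rw [this]
      exact hMetzler i j h
  -- the key entrywise inequality : ((a•1 - A) *ᵥ x) i ≤ 0
  have hineq : ∀ i, ((a • (1 : Mx n) - A) *ᵥ x) i ≤ 0 := by
    intro i
    have hBv : ∑ j, ((B i j : ℝ) : ℂ) * v j = (μ + (c : ℂ)) * v i := by
      have hterm : ∀ j, ((B i j : ℝ) : ℂ) * v j
          = (algebraMap ℝ ℂ (A i j)) * v j + (if j = i then (c : ℂ) * v j else 0) := by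
        intro j
        by_cases h : j = i
        · subst h
          have : B j j = A j j + c := by simp [hB_def, Matrix.one_apply]
          rw [this]
          simp only [if_pos rfl]
          push_cast
          simp [Complex.coe_algebraMap]
          ring
        · have : B i j = A i j := by
            simp [hB_def, Matrix.one_apply_ne (fun hij => h hij.symm)]
          rw [this, if_neg h]
          simp [Complex.coe_algebraMap]
      rw [Finset.sum_congr rfl (fun j _ => hterm j), Finset.sum_add_distrib,
        Finset.sum_ite_eq' Finset.univ i (fun j => (c : ℂ) * v j)]
      simp only [Finset.mem_univ, if_pos]
      rw [← heig i]
      ring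
    have key : (a + c) * x i ≤ (B *ᵥ x) i := by
      have h1 : (a + c) * x i ≤ ‖(μ + (c:ℂ)) * v i‖ := by
        rw [norm_mul]
        apply mul_le_mul_of_nonneg_right _ (hxnn i)
        have hrec : ((μ + (c:ℂ))).re = a + c := by simp [ha_def]
        rw [← hrec]
        exact Complex.re_le_norm _
      have h2 : ‖(μ + (c:ℂ)) * v i‖ ≤ (B *ᵥ x) i := by
        rw [← hBv]
        refine le_trans (norm_sum_le _ _) ?_
        rw [Matrix.mulVec, dotProduct]
        apply le_of_eq
        apply Finset.sum_congr rfl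
        intro j _
        rw [norm_mul, Complex.norm_real, Real.norm_eq_abs, abs_of_nonneg (hB i j)]
      exact le_trans h1 h2
    have h3 : (B *ᵥ x) i = (A *ᵥ x) i + c * x i := by
      rw [hB_def, Matrix.add_mulVec]
      simp [Matrix.smul_mulVec, Matrix.one_mulVec]
    have h4 : ((a • (1 : Mx n) - A) *ᵥ x) i = a * x i - (A *ᵥ x) i := by
      rw [Matrix.sub_mulVec]
      simp [Matrix.smul_mulVec, Matrix.one_mulVec]
    rw [h4]
    have : a * x i ≤ (A *ᵥ x) i := by
      have := key
      rw [h3] at this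
      linarith [this]
    linarith
  -- apply resolvent nonnegativity at s = a
  have hres := resolvent_nonneg A hn hpos hMetzler a hre
  have hdetu : IsUnit (a • (1 : Mx n) - A).det := det_unit A (hpos a hre)
  have hxeq : x = (a • (1 : Mx n) - A)⁻¹ *ᵥ ((a • (1 : Mx n) - A) *ᵥ x) := by
    rw [Matrix.mulVec_mulVec, Matrix.nonsing_inv_mul _ hdetu, Matrix.one_mulVec]
  have hxle : ∀ i, x i ≤ 0 := by
    intro i
    rw [hxeq]
    rw [Matrix.mulVec, dotProduct]
    apply Finset.sum_nonpos
    intro j _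
    exact mul_nonpos_of_nonneg_of_nonpos (hres i j) (hineq j)
  have hx0 : ∀ i, x i = 0 := fun i => le_antisymm (hxle i) (hxnn i)
  apply hv0
  funext i
  have := hx0 i
  rw [hx_def] at this
  exact norm_eq_zero.mp this
end

section
/- Let A be a real n×n Metzler matrix. The continuous-time system ẋ = Ax is exponentially stable (all eigenvalues of A have negative real parts) if and only if all coefficients of the characteristic polynomial of A are strictly positive. -/
open Matrix Polynomial

lemma my_eval_charpoly {n : ℕ} {K : Type*} [Field K] (M : Matrix (Fin n) (Fin n) K) (r : K) :
    M.charpoly.eval r = (r • (1 : Matrix (Fin n) (Fin n) K) - M).det := by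
  rw [Matrix.charpoly, eval_det, matPolyEquiv_charmatrix]
  congr 1
  rw [eval_sub, eval_X, eval_C]
  congr 1
  simp [Matrix.scalar, Matrix.smul_eq_diagonal_mul]

lemma spec_iff_root {n : ℕ} {K : Type*} [Field K] [DecidableEq K] (M : Matrix (Fin n) (Fin n) K) (μ : K) :
    μ ∈ spectrum K M ↔ M.charpoly.eval μ = 0 := by
  rw [spectrum.mem_iff, my_eval_charpoly, Matrix.isUnit_iff_isUnit_det, isUnit_iff_ne_zero,
    not_ne_iff, Algebra.algebraMap_eq_smul_one]

lemma posCoeffs_mul {p q : ℝ[X]} (hp0 : p ≠ 0) (hq0 : q ≠ 0)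
    (hp : ∀ k ≤ p.natDegree, 0 < p.coeff k) (hq : ∀ k ≤ q.natDegree, 0 < q.coeff k) :
    ∀ k ≤ (p * q).natDegree, 0 < (p * q).coeff k := by
  intro k hk
  rw [Polynomial.natDegree_mul hp0 hq0] at hk
  rw [Polynomial.coeff_mul]
  apply Finset.sum_pos'
  · rintro ⟨i, j⟩ hij
    rcases le_or_gt i p.natDegree with hi | hi
    · rcases le_or_gt j q.natDegree with hj | hj
      · exact le_of_lt (mul_pos (hp i hi) (hq j hj))
      · simp [Polynomial.coeff_eq_zero_of_natDegree_lt hj]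
    · simp [Polynomial.coeff_eq_zero_of_natDegree_lt hi]
  · refine ⟨(min k p.natDegree, k - min k p.natDegree), ?_, ?_⟩
    · simp [Finset.mem_antidiagonal, Nat.min_def]
      split <;> omega
    · have hj : k - min k p.natDegree ≤ q.natDegree := by omega
      exact mul_pos (hp _ (min_le_right _ _)) (hq _ hj)

lemma aeval_conj_real (p : ℝ[X]) (z : ℂ) :
    Polynomial.aeval (starRingEnd ℂ z) p = starRingEnd ℂ (Polynomial.aeval z p) := by
  rw [Polynomial.aeval_def, Polynomial.aeval_def, Polynomial.hom_eval₂]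
  congr 1
  ext x
  simp

lemma hurwitz_posCoeffs : ∀ (d : ℕ) (p : ℝ[X]), p.Monic → p.natDegree = d →
    (∀ z : ℂ, Polynomial.aeval z p = 0 → z.re < 0) →
    ∀ k ≤ p.natDegree, 0 < p.coeff k := by
  intro d
  induction d using Nat.strong_induction_on with
  | _ d ih =>
    intro p hm hd hroots
    rcases Nat.eq_zero_or_pos d with h0 | hpos
    · have hp1 : p = 1 := hm.natDegree_eq_zero.mp (hd.trans h0)
      subst hp1
      intro k hk
      simp only [Polynomial.natDegree_one, Nat.le_zero] at hk
      simp [hk]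
    · -- p has a complex root
      obtain ⟨z, hz⟩ := Complex.exists_root (f := p.map (algebraMap ℝ ℂ)) (by
        rw [Polynomial.degree_map_eq_of_injective (algebraMap ℝ ℂ).injective,
          Polynomial.degree_eq_natDegree hm.ne_zero, hd]
        exact_mod_cast hpos)
      have hzr : Polynomial.aeval z p = 0 := by
        rwa [Polynomial.aeval_def, ← Polynomial.eval_map]
      have hzre : z.re < 0 := hroots z hzr
      by_cases him : z.im = 0
      · -- real root
        have hzeq : z = (algebraMap ℝ ℂ) z.re := by
          apply Complex.ext <;> simp [him]
        have hr : Polynomial.eval z.re p = 0 := by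
          have h2 := hzr
          rw [hzeq, Polynomial.aeval_algebraMap_apply] at h2
          have h3 : Polynomial.aeval z.re p = Polynomial.eval z.re p := by
            rw [Polynomial.coe_aeval_eq_eval]
          rw [h3] at h2
          exact (map_eq_zero_iff _ (algebraMap ℝ ℂ).injective).mp h2
        set q := p /ₘ (X - C z.re) with hq
        have hfac : (X - C z.re) * q = p :=
          (Polynomial.mul_divByMonic_eq_iff_isRoot).2 hr
        have hqm : q.Monic := (Polynomial.monic_X_sub_C z.re).of_mul_monic_left (hfac ▸ hm)
        have hnd : 1 + q.natDegree = d := by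
          rw [← hd, ← hfac, Polynomial.natDegree_mul (Polynomial.X_sub_C_ne_zero z.re) hqm.ne_zero,
            Polynomial.natDegree_X_sub_C]
        have hqroots : ∀ w : ℂ, Polynomial.aeval w q = 0 → w.re < 0 := by
          intro w hw
          apply hroots
          rw [← hfac, _root_.map_mul, hw, mul_zero]
        have hqpos := ih q.natDegree (by omega) q hqm rfl hqroots
        have hlin : ∀ k ≤ (X - C z.re).natDegree, 0 < (X - C z.re).coeff k := by
          intro k hk
          rw [Polynomial.natDegree_X_sub_C] at hk
          interval_cases k <;>
            simp [Polynomial.coeff_sub, Polynomial.coeff_X, Polynomial.coeff_C] <;> linarith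
        rw [← hfac]
        exact posCoeffs_mul (Polynomial.X_sub_C_ne_zero z.re) hqm.ne_zero hlin hqpos
      · -- complex conjugate pair
        set a := z.re with ha
        set b := z.im with hb
        set q2 : ℝ[X] := X ^ 2 + (C (-(2 * a)) * X + C (a * a + b * b)) with hq2def
        have hq2m : q2.Monic := by
          apply Polynomial.monic_X_pow_add
          exact lt_of_le_of_lt (Polynomial.degree_linear_le) (by decide)
        have hq2deg : q2.natDegree = 2 := by
          rw [hq2def]
          apply Polynomial.natDegree_eq_of_degree_eq_some
          rw [Polynomial.degree_add_eq_left_of_degree_lt, Polynomial.degree_X_pow]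
          rw [Polynomial.degree_X_pow]
          exact lt_of_le_of_lt (Polynomial.degree_linear_le) (by decide)
        have hzc : Polynomial.aeval (starRingEnd ℂ z) p = 0 := by
          rw [aeval_conj_real, hzr, map_zero]
        have hdvd : q2 ∣ p := by
          rw [← Polynomial.map_dvd_map (algebraMap ℝ ℂ) (algebraMap ℝ ℂ).injective hq2m]
          have h1 : (X - C z) ∣ p.map (algebraMap ℝ ℂ) := Polynomial.dvd_iff_isRoot.2 hz
          have h2 : (X - C (starRingEnd ℂ z)) ∣ p.map (algebraMap ℝ ℂ) := by
            apply Polynomial.dvd_iff_isRoot.2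
            rw [Polynomial.IsRoot, Polynomial.eval_map, ← Polynomial.aeval_def]
            exact hzc
          have hco : IsCoprime (X - C z) (X - C (starRingEnd ℂ z)) := by
            apply Polynomial.isCoprime_X_sub_C_of_isUnit_sub
            rw [isUnit_iff_ne_zero, sub_ne_zero]
            intro h
            apply him
            have h4 := congrArg Complex.im h
            simp [Complex.conj_im] at h4
            linarith [h4]
          have hexp : q2.map (algebraMap ℝ ℂ) = (X - C z) * (X - C (starRingEnd ℂ z)) := by
            have hadd : (z + starRingEnd ℂ z) = ((2 * a : ℝ) : ℂ) := by
              rw [Complex.add_conj]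
            have hmul : (z * starRingEnd ℂ z) = ((a * a + b * b : ℝ) : ℂ) := by
              rw [Complex.mul_conj, Complex.normSq_apply]
            have hf2 : (algebraMap ℝ ℂ) (-(2 * a)) = -(z + starRingEnd ℂ z) := by
              rw [hadd]; push_cast; rfl
            have hf3 : (algebraMap ℝ ℂ) (a * a + b * b) = z * starRingEnd ℂ z := by
              rw [hmul]; push_cast; rfl
            rw [hq2def, Polynomial.map_add, Polynomial.map_add, Polynomial.map_pow,
              Polynomial.map_mul, Polynomial.map_X, Polynomial.map_C, Polynomial.map_C, hf2, hf3]
            simp only [Polynomial.C_neg, Polynomial.C_add, Polynomial.C_mul]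
            ring
          rw [hexp]
          exact hco.mul_dvd h1 h2
        obtain ⟨q, hfac⟩ := hdvd
        have hqm : q.Monic := hq2m.of_mul_monic_left (hfac ▸ hm)
        have hnd : 2 + q.natDegree = d := by
          rw [← hd, hfac, Polynomial.natDegree_mul hq2m.ne_zero hqm.ne_zero, hq2deg]
        have hqroots : ∀ w : ℂ, Polynomial.aeval w q = 0 → w.re < 0 := by
          intro w hw
          apply hroots
          rw [hfac, _root_.map_mul, hw, mul_zero]
        have hqpos := ih q.natDegree (by omega) q hqm rfl hqroots
        have hbb : 0 < b * b := mul_self_pos.mpr him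
        have hq2pos : ∀ k ≤ q2.natDegree, 0 < q2.coeff k := by
          intro k hk
          rw [hq2deg] at hk
          interval_cases k
          · simp [hq2def, Polynomial.coeff_add, Polynomial.coeff_X_pow, Polynomial.coeff_C_mul,
              Polynomial.coeff_C, Polynomial.coeff_X]
            nlinarith [mul_self_nonneg a]
          · simp [hq2def, Polynomial.coeff_add, Polynomial.coeff_X_pow, Polynomial.coeff_C_mul,
              Polynomial.coeff_C, Polynomial.coeff_X]
            linarith
          · simp [hq2def, Polynomial.coeff_add, Polynomial.coeff_X_pow, Polynomial.coeff_C_mul,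
              Polynomial.coeff_C, Polynomial.coeff_X]
        rw [hfac]
        exact posCoeffs_mul hq2m.ne_zero hqm.ne_zero hq2pos hqpos

example : True := trivial

lemma solve_nonneg {n : ℕ} {B : Matrix (Fin n) (Fin n) ℝ} (hB : ∀ i j, 0 ≤ B i j)
    {t : ℝ} (ht : ∀ i, ∑ j, B i j < t) {x y : Fin n → ℝ}
    (hxy : (t • (1 : Matrix (Fin n) (Fin n) ℝ) - B).mulVec x = y) (hy : ∀ i, 0 ≤ y i) :
    ∀ i, 0 ≤ x i := by
  by_contra hneg
  push_neg at hneg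
  obtain ⟨i₁, hi₁⟩ := hneg
  obtain ⟨i₀, -, hmin⟩ := Finset.exists_min_image Finset.univ x ⟨i₁, Finset.mem_univ i₁⟩
  have hmin' : ∀ j, x i₀ ≤ x j := fun j => hmin j (Finset.mem_univ j)
  have hm : x i₀ < 0 := lt_of_le_of_lt (hmin' i₁) hi₁
  have hyi : y i₀ = t * x i₀ - ∑ j, B i₀ j * x j := by
    rw [← hxy]
    simp [Matrix.mulVec, Matrix.sub_apply, dotProduct, Matrix.smul_apply, Matrix.one_apply,
      sub_mul, Finset.sum_sub_distrib, ite_mul]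
  have hsum : (∑ j, B i₀ j) * x i₀ ≤ ∑ j, B i₀ j * x j := by
    rw [Finset.sum_mul]
    exact Finset.sum_le_sum fun j _ => mul_le_mul_of_nonneg_left (hmin' j) (hB i₀ j)
  have : y i₀ < 0 := by
    rw [hyi]
    have h1 : (∑ j, B i₀ j) < t := ht i₀
    nlinarith
  linarith [hy i₀]

lemma myColMulVec {n : ℕ} (A B : Matrix (Fin n) (Fin n) ℝ) (j : Fin n) :
    A.mulVec (fun i => B i j) = fun i => (A * B) i j := by
  ext i
  simp [Matrix.mulVec, Matrix.mul_apply, dotProduct]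

lemma step_nonneg {n : ℕ} {B : Matrix (Fin n) (Fin n) ℝ} (hB : ∀ i j, 0 ≤ B i j)
    {t : ℝ} (ht : ∀ i, ∑ j, B i j < t)
    (hdet : (t • (1 : Matrix (Fin n) (Fin n) ℝ) - B).det ≠ 0) :
    ∀ i j, 0 ≤ (t • (1 : Matrix (Fin n) (Fin n) ℝ) - B)⁻¹ i j := by
  intro i j
  set M := t • (1 : Matrix (Fin n) (Fin n) ℝ) - B with hM
  have hu : IsUnit M.det := isUnit_iff_ne_zero.mpr hdet
  have hmul : M * M⁻¹ = 1 := Matrix.mul_nonsing_inv M hu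
  have hcol : M.mulVec (fun i => M⁻¹ i j) = fun i => (1 : Matrix (Fin n) (Fin n) ℝ) i j := by
    rw [myColMulVec, hmul]
  exact solve_nonneg hB ht hcol (fun i => by
    by_cases h : i = j <;> simp [Matrix.one_apply, h]) i

lemma rowsum_lt {n : ℕ} {B : Matrix (Fin n) (Fin n) ℝ} (hB : ∀ i j, 0 ≤ B i j) (i : Fin n)
    {t : ℝ} (ht : (∑ i, ∑ j, B i j) + 1 ≤ t) : ∑ j, B i j < t := by
  have h1 : ∑ j, B i j ≤ ∑ i, ∑ j, B i j :=
    Finset.single_le_sum (f := fun i => ∑ j, B i j)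
      (fun i _ => Finset.sum_nonneg fun j _ => hB i j) (Finset.mem_univ i)
  linarith

lemma resolvent_nonneg {n : ℕ} {B : Matrix (Fin n) (Fin n) ℝ} (hB : ∀ i j, 0 ≤ B i j)
    {s : ℝ} (hs : ∀ t, s ≤ t → (t • (1 : Matrix (Fin n) (Fin n) ℝ) - B).det ≠ 0) :
    ∀ i j, 0 ≤ (s • (1 : Matrix (Fin n) (Fin n) ℝ) - B)⁻¹ i j := by
  classical
  set M : ℝ → Matrix (Fin n) (Fin n) ℝ := fun t => t • 1 - B with hMdef
  set f : ℝ → Matrix (Fin n) (Fin n) ℝ := fun t => (M t)⁻¹ with hfdef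
  set P : ℝ → Prop := fun t => ∀ i j, 0 ≤ f t i j with hPdef
  set t0 : ℝ := max s ((∑ i, ∑ j, B i j) + 1) with ht0def
  have hst0 : s ≤ t0 := le_max_left _ _
  have hrs : ∀ t, t0 ≤ t → ∀ i, ∑ j, B i j < t := fun t htt i =>
    rowsum_lt hB i (le_trans (le_max_right _ _) htt)
  have hbig : ∀ t, t0 ≤ t → P t := fun t htt =>
    step_nonneg hB (hrs t htt) (hs t (le_trans hst0 htt))
  have hcont : ∀ c, s ≤ c → ∀ i j, ContinuousAt (fun u => f u i j) c := by
    intro c hc i j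
    have hMc : Continuous M := by
      apply Continuous.sub
      · exact continuous_id.smul continuous_const
      · exact continuous_const
    have hdetc : Continuous fun u => (M u).det := hMc.matrix_det
    have hadjc : Continuous fun u => (M u).adjugate i j :=
      (continuous_apply j).comp ((continuous_apply i).comp hMc.matrix_adjugate)
    have hinv : ContinuousAt (fun u => ((M u).det)⁻¹) c :=
      hdetc.continuousAt.inv₀ (hs c hc)
    have heq : ∀ u, f u i j = ((M u).det)⁻¹ * (M u).adjugate i j := by
      intro u
      rw [hfdef]
      simp only [Matrix.inv_def, Ring.inverse_eq_inv', Matrix.smul_apply, smul_eq_mul]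
    have hca : ContinuousAt (fun u => ((M u).det)⁻¹ * (M u).adjugate i j) c :=
      hinv.mul hadjc.continuousAt
    simpa only [← heq] using hca
  set E : Set ℝ := {t | s ≤ t ∧ ∀ u, t ≤ u → u ≤ t0 → P u} with hEdef
  have ht0E : t0 ∈ E := ⟨hst0, fun u h1 _ => hbig u h1⟩
  have hEne : E.Nonempty := ⟨t0, ht0E⟩
  have hEbdd : BddBelow E := ⟨s, fun t ht => ht.1⟩
  set c : ℝ := sInf E with hcdef
  have hsc : s ≤ c := le_csInf hEne fun t ht => ht.1
  have hct0 : c ≤ t0 := csInf_le hEbdd ht0E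
  have hPgt : ∀ u, c < u → u ≤ t0 → P u := by
    intro u hcu hu0
    obtain ⟨t, htE, htu⟩ := exists_lt_of_csInf_lt hEne hcu
    exact htE.2 u (le_of_lt htu) hu0
  have hPc : P c := by
    rcases eq_or_lt_of_le hct0 with hceq | hclt
    · rw [hceq]; exact hbig t0 le_rfl
    · intro i j
      have htend : Filter.Tendsto (fun u => f u i j) (nhdsWithin c (Set.Ioi c))
          (nhds (f c i j)) := (hcont c hsc i j).continuousWithinAt
      apply ge_of_tendsto htend
      have hev : ∀ᶠ u in nhdsWithin c (Set.Ioi c), u < t0 ∧ c < u := by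
        apply Filter.Eventually.and
        · exact Filter.Eventually.filter_mono nhdsWithin_le_nhds
            (Filter.Tendsto.eventually_lt_const hclt Filter.tendsto_id)
        · exact eventually_mem_nhdsWithin
      exact hev.mono fun u hu => hPgt u hu.2 (le_of_lt hu.1) i j
  rcases eq_or_lt_of_le hsc with hceq | hclt
  · have := hPc
    rw [← hceq] at this
    exact this
  · exfalso
    set h : Matrix (Fin n) (Fin n) ℝ := f c with hhdef
    have hh0 : ∀ i j, 0 ≤ h i j := hPc
    set T : ℝ := (∑ i, ∑ j, h i j) + 1 with hTdef
    have hT1 : 1 ≤ T := by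
      have h0 : 0 ≤ ∑ i, ∑ j, h i j :=
        Finset.sum_nonneg fun i _ => Finset.sum_nonneg fun j _ => hh0 i j
      rw [hTdef]; linarith
    have hTpos : 0 < T := lt_of_lt_of_le zero_lt_one hT1
    set δ : ℝ := min ((c - s) / 2) (1 / (2 * T)) with hδdef
    have hδpos : 0 < δ := lt_min (by linarith) (by positivity)
    have hδcs : δ ≤ (c - s) / 2 := min_le_left _ _
    have hδT : δ ≤ 1 / (2 * T) := min_le_right _ _
    set t : ℝ := c - δ with htdef
    have hts : s ≤ t := by rw [htdef]; linarith
    have htc : t < c := by rw [htdef]; linarith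
    have hkey : ∀ u, t ≤ u → u < c → P u := by
      intro u hu1 hu2
      set ε : ℝ := c - u with hεdef
      have hε1 : 0 < ε := by rw [hεdef]; linarith
      have hε2 : ε ≤ δ := by
        rw [hεdef]
        rw [htdef] at hu1
        linarith
      have hus : s ≤ u := le_trans hts hu1
      have hudet : (M u).det ≠ 0 := hs u hus
      have hcdet : (M c).det ≠ 0 := hs c hsc
      have huu : IsUnit (M u).det := isUnit_iff_ne_zero.mpr hudet
      have hcu : IsUnit (M c).det := isUnit_iff_ne_zero.mpr hcdet
      have hMu : M u = M c - ε • 1 := by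
        show u • (1 : Matrix (Fin n) (Fin n) ℝ) - B = (c • 1 - B) - ε • 1
        rw [hεdef, sub_smul]
        abel
      have hid : ((1 / ε) • (1 : Matrix (Fin n) (Fin n) ℝ) - h) * f u = (1 / ε) • f c := by
        have h1 : f c * M u = 1 - ε • h := by
          rw [hMu, Matrix.mul_sub, Matrix.nonsing_inv_mul (M c) hcu, Matrix.mul_smul,
            Matrix.mul_one]
        have h2 : (1 - ε • h) * f u = f c := by
          rw [← h1, Matrix.mul_assoc, Matrix.mul_nonsing_inv (M u) huu, Matrix.mul_one]
        have h3 : (1 / ε) • ((1 - ε • h) * f u) = (1 / ε) • f c := by rw [h2]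
        rw [← h3, ← Matrix.smul_mul, smul_sub, smul_smul, one_div,
          inv_mul_cancel₀ (ne_of_gt hε1), one_smul]
      have hrh : ∀ i, ∑ j, h i j < 1 / ε := by
        intro i
        have h1 : ∑ j, h i j ≤ ∑ i, ∑ j, h i j :=
          Finset.single_le_sum (f := fun i => ∑ j, h i j)
            (fun i _ => Finset.sum_nonneg fun j _ => hh0 i j) (Finset.mem_univ i)
        have h2 : T * (2 * δ) ≤ 1 := by
          calc T * (2 * δ) = 2 * T * δ := by ring
            _ ≤ 2 * T * (1 / (2 * T)) := mul_le_mul_of_nonneg_left hδT (by positivity)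
            _ = 1 := by field_simp
        have h3 : T ≤ 1 / (2 * δ) := by
          rw [le_div_iff₀ (by positivity)]
          linarith
        have h4 : 1 / (2 * δ) < 1 / ε := by
          apply one_div_lt_one_div_of_lt hε1
          linarith
        have h5 : ∑ j, h i j < T := by linarith
        linarith
      intro i j
      have hcol : ((1 / ε) • (1 : Matrix (Fin n) (Fin n) ℝ) - h).mulVec (fun i => f u i j)
          = fun i => ((1 / ε) • f c) i j := by
        rw [myColMulVec, hid]
      exact solve_nonneg hh0 hrh hcol
        (fun i => by
          simp only [Matrix.smul_apply, smul_eq_mul]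
          exact mul_nonneg (by positivity) (hPc i j)) i
    have htE : t ∈ E := by
      refine ⟨hts, fun u hu1 hu2 => ?_⟩
      rcases lt_trichotomy u c with h1 | h1 | h1
      · exact hkey u hu1 h1
      · rw [h1]; exact hPc
      · exact hPgt u h1 hu2
    have hle := csInf_le hEbdd htE
    rw [← hcdef] at hle
    linarith

theorem stmt13 {n : ℕ} (hn : 1 ≤ n) (A : Matrix (Fin n) (Fin n) ℝ)
    (hMetzler : ∀ i j, i ≠ j → 0 ≤ A i j) :
    (∀ μ ∈ specC A, μ.re < 0) ↔ (∀ k ≤ n, 0 < A.charpoly.coeff k) := by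
  have hdim : A.charpoly.natDegree = n := by
    rw [Matrix.charpoly_natDegree_eq_dim, Fintype.card_fin]
  constructor
  · -- forward
    intro hspec k hk
    have hroots : ∀ z : ℂ, Polynomial.aeval z A.charpoly = 0 → z.re < 0 := by
      intro z hz
      apply hspec
      rw [specC, spec_iff_root, Matrix.charpoly_map]
      rwa [Polynomial.aeval_def, ← Polynomial.eval_map] at hz
    exact hurwitz_posCoeffs A.charpoly.natDegree A.charpoly (Matrix.charpoly_monic A) rfl
      hroots k (by omega)
  · -- backward
    intro hcoef μ hμ
    by_contra hre
    push_neg at hre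
    -- positivity of the characteristic polynomial on [0, ∞)
    have heval : ∀ x : ℝ, 0 ≤ x → 0 < A.charpoly.eval x := by
      intro x hx
      rw [Polynomial.eval_eq_sum_range]
      apply Finset.sum_pos'
      · intro i hi
        rw [Finset.mem_range] at hi
        exact mul_nonneg (le_of_lt (hcoef i (by omega))) (pow_nonneg hx i)
      · refine ⟨0, Finset.mem_range.mpr (by omega), ?_⟩
        simpa using hcoef 0 (by omega)
    -- eigenvector
    have hdet0 : (μ • (1 : Matrix (Fin n) (Fin n) ℂ) - A.map (algebraMap ℝ ℂ)).det = 0 := by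
      have := (spec_iff_root (A.map (algebraMap ℝ ℂ)) μ).mp hμ
      rwa [my_eval_charpoly] at this
    obtain ⟨v, hv0, hv⟩ := (Matrix.exists_mulVec_eq_zero_iff).mpr hdet0
    have heig : (A.map (algebraMap ℝ ℂ)).mulVec v = μ • v := by
      have h1 := hv
      rw [Matrix.sub_mulVec, Matrix.smul_mulVec, Matrix.one_mulVec, sub_eq_zero] at h1
      exact h1.symm
    set w : Fin n → ℝ := fun i => ‖v i‖ with hwdef
    have hw0 : ∀ i, 0 ≤ w i := fun i => norm_nonneg (v i)
    obtain ⟨i₀, hi₀⟩ : ∃ i, v i ≠ 0 := by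
      by_contra hc
      push_neg at hc
      exact hv0 (funext hc)
    have hwi₀ : 0 < w i₀ := by
      rw [hwdef]
      exact norm_pos_iff.mpr hi₀
    -- A *ᵥ w dominates μ.re • w
    have hAw : ∀ i, μ.re * w i ≤ (A.mulVec w) i := by
      intro i
      have heigi : ∑ j, (algebraMap ℝ ℂ) (A i j) * v j = μ * v i := by
        have := congrFun heig i
        simpa [Matrix.mulVec, dotProduct, Matrix.map_apply] using this
      have hsplit : (μ - (algebraMap ℝ ℂ) (A i i)) * v i
          = ∑ j ∈ Finset.univ.erase i, (algebraMap ℝ ℂ) (A i j) * v j := by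
        rw [← Finset.add_sum_erase Finset.univ _ (Finset.mem_univ i)] at heigi
        rw [sub_mul]
        rw [← heigi]
        ring
      have habs : ‖μ - (algebraMap ℝ ℂ) (A i i)‖ * w i
          ≤ ∑ j ∈ Finset.univ.erase i, A i j * w j := by
        calc ‖μ - (algebraMap ℝ ℂ) (A i i)‖ * w i
            = ‖(μ - (algebraMap ℝ ℂ) (A i i)) * v i‖ := by
              rw [norm_mul]
          _ = ‖∑ j ∈ Finset.univ.erase i, (algebraMap ℝ ℂ) (A i j) * v j‖ := by
              rw [hsplit]
          _ ≤ ∑ j ∈ Finset.univ.erase i, ‖(algebraMap ℝ ℂ) (A i j) * v j‖ :=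
              norm_sum_le _ _
          _ = ∑ j ∈ Finset.univ.erase i, A i j * w j := by
              apply Finset.sum_congr rfl
              intro j hj
              rw [norm_mul]
              congr 1
              rw [Complex.coe_algebraMap, Complex.norm_real, Real.norm_eq_abs]
              exact abs_of_nonneg (hMetzler i j (Finset.ne_of_mem_erase hj).symm)
      have hrele : (μ.re - A i i) * w i ≤ ‖μ - (algebraMap ℝ ℂ) (A i i)‖ * w i := by
        apply mul_le_mul_of_nonneg_right _ (hw0 i)
        have h1 := Complex.re_le_norm (μ - (algebraMap ℝ ℂ) (A i i))
        have h2 : (μ - (algebraMap ℝ ℂ) (A i i)).re = μ.re - A i i := by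
          simp [Complex.coe_algebraMap]
        linarith [h1, h2.symm.le, h2.le]
      have hmv : (A.mulVec w) i = A i i * w i + ∑ j ∈ Finset.univ.erase i, A i j * w j := by
        simp [Matrix.mulVec, dotProduct]
      rw [hmv]
      nlinarith [habs, hrele]
    -- shift to a nonnegative matrix
    set cs : ℝ := ∑ i, |A i i| with hcsdef
    have hcsk : ∀ i, |A i i| ≤ cs :=  fun i =>
      Finset.single_le_sum (f := fun i => |A i i|) (fun i _ => abs_nonneg _) (Finset.mem_univ i)
    set B : Matrix (Fin n) (Fin n) ℝ := A + cs • 1 with hBdef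
    have hBnn : ∀ i j, 0 ≤ B i j := by
      intro i j
      by_cases h : i = j
      · subst h
        have := hcsk i
        have h2 := neg_abs_le (A i i)
        simp [hBdef, Matrix.add_apply, Matrix.smul_apply, Matrix.one_apply]
        linarith
      · simpa [hBdef, Matrix.add_apply, Matrix.smul_apply, Matrix.one_apply, h] using
          hMetzler i j h
    have hshift : ∀ t : ℝ, t • (1 : Matrix (Fin n) (Fin n) ℝ) - B
        = (t - cs) • 1 - A := by
      intro t
      rw [hBdef, sub_smul]
      abel
    have hdetB : ∀ t : ℝ, μ.re + cs ≤ t → (t • (1 : Matrix (Fin n) (Fin n) ℝ) - B).det ≠ 0 := by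
      intro t htle
      rw [hshift, ← my_eval_charpoly]
      exact ne_of_gt (heval (t - cs) (by linarith))
    have hres := resolvent_nonneg hBnn hdetB
    rw [hshift, add_sub_cancel_right] at hres
    -- derive the contradiction
    set G : Matrix (Fin n) (Fin n) ℝ := μ.re • 1 - A with hGdef
    have hGdet : IsUnit G.det := by
      rw [hGdef, ← my_eval_charpoly]
      exact isUnit_iff_ne_zero.mpr (ne_of_gt (heval μ.re hre))
    set y : Fin n → ℝ := G.mulVec w with hydef
    have hy : ∀ i, y i ≤ 0 := by
      intro i
      have h1 : y i = μ.re * w i - (A.mulVec w) i := by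
        rw [hydef, hGdef, Matrix.sub_mulVec, Matrix.smul_mulVec, Matrix.one_mulVec]
        simp
      rw [h1]
      linarith [hAw i]
    have hwG : w = G⁻¹.mulVec y := by
      rw [hydef, Matrix.mulVec_mulVec, Matrix.nonsing_inv_mul G hGdet, Matrix.one_mulVec]
    have hcontra : w i₀ ≤ 0 := by
      rw [hwG]
      simp only [Matrix.mulVec, dotProduct]
      apply Finset.sum_nonpos
      intro j _
      exact mul_nonpos_of_nonneg_of_nonpos (hres i₀ j) (hy j)
    linarith
end

section
/- If 0 ≤ P ≤ Q entrywise for real n×n matrices P and Q, then the spectral radius of P is at most the spectral radius of Q: max{|λ| : λ ∈ spec_ℂ(P)} ≤ max{|λ| : λ ∈ spec_ℂ(Q)}. -/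
open Matrix

attribute [local instance] Matrix.linftyOpNormedRing Matrix.linftyOpNormedAlgebra

theorem stmt19 {n : ℕ} (hn : 1 ≤ n) (P Q : Matrix (Fin n) (Fin n) ℝ)
    (hP : ∀ i j, 0 ≤ P i j) (hPQ : ∀ i j, P i j ≤ Q i j) :
    ∀ rP rQ : ℝ,
      IsGreatest {x : ℝ | ∃ μ ∈ specC P, x = ‖μ‖} rP →
      IsGreatest {x : ℝ | ∃ μ ∈ specC Q, x = ‖μ‖} rQ →
      rP ≤ rQ := by
  intro rP rQ hgP hgQ
  haveI : CompleteSpace (Matrix (Fin n) (Fin n) ℂ) := FiniteDimensional.complete ℂ _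
  set P' := P.map (algebraMap ℝ ℂ) with hP'
  set Q' := Q.map (algebraMap ℝ ℂ) with hQ'
  -- entrywise power bounds
  have key : ∀ k : ℕ, ∀ i j, 0 ≤ (P ^ k) i j ∧ (P ^ k) i j ≤ (Q ^ k) i j := by
    intro k
    induction k with
    | zero =>
      intro i j
      simp only [pow_zero]
      refine ⟨?_, le_rfl⟩
      rw [Matrix.one_apply]
      split <;> norm_num
    | succ k ih =>
      intro i j
      rw [pow_succ, pow_succ, Matrix.mul_apply, Matrix.mul_apply]
      constructor
      · exact Finset.sum_nonneg fun l _ => mul_nonneg (ih i l).1 (hP l j)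
      · refine Finset.sum_le_sum fun l _ => ?_
        exact mul_le_mul (ih i l).2 (hPQ l j) (hP l j)
          ((ih i l).1.trans (ih i l).2)
  have hmapP : ∀ k : ℕ, P' ^ k = (P ^ k).map (algebraMap ℝ ℂ) := by
    intro k
    rw [hP', ← RingHom.mapMatrix_apply, ← map_pow, RingHom.mapMatrix_apply]
  have hmapQ : ∀ k : ℕ, Q' ^ k = (Q ^ k).map (algebraMap ℝ ℂ) := by
    intro k
    rw [hQ', ← RingHom.mapMatrix_apply, ← map_pow, RingHom.mapMatrix_apply]
  have hnorm : ∀ k : ℕ, ‖P' ^ k‖₊ ≤ ‖Q' ^ k‖₊ := by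
    intro k
    rw [hmapP, hmapQ, Matrix.linfty_opNNNorm_def, Matrix.linfty_opNNNorm_def]
    refine Finset.sup_mono_fun fun i _ => Finset.sum_le_sum fun j _ => ?_
    simp only [Matrix.map_apply]
    have h := key k i j
    have e1 : ‖algebraMap ℝ ℂ ((P ^ k) i j)‖₊ = ‖(P ^ k) i j‖₊ := by
      simp [Complex.nnnorm_real]
    have e2 : ‖algebraMap ℝ ℂ ((Q ^ k) i j)‖₊ = ‖(Q ^ k) i j‖₊ := by
      simp [Complex.nnnorm_real]
    rw [e1, e2, Real.nnnorm_of_nonneg h.1, Real.nnnorm_of_nonneg (h.1.trans h.2)]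
    exact h.2
  have hsr : spectralRadius ℂ P' ≤ spectralRadius ℂ Q' := by
    refine le_of_tendsto_of_tendsto'
      (spectrum.pow_nnnorm_pow_one_div_tendsto_nhds_spectralRadius P')
      (spectrum.pow_nnnorm_pow_one_div_tendsto_nhds_spectralRadius Q') fun k => ?_
    exact ENNReal.rpow_le_rpow (by exact_mod_cast hnorm k) (by positivity)
  obtain ⟨μP, hμP, hrPe⟩ := hgP.1
  obtain ⟨μQ, hμQ, hrQe⟩ := hgQ.1
  have h1 : ENNReal.ofReal rP ≤ spectralRadius ℂ P' := by
    have : (‖μP‖₊ : ENNReal) ≤ spectralRadius ℂ P' :=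
      le_iSup₂ (f := fun k (_ : k ∈ spectrum ℂ P') => (‖k‖₊ : ENNReal)) μP hμP
    refine le_trans (le_of_eq ?_) this
    rw [hrPe, ← ENNReal.ofReal_coe_nnreal, coe_nnnorm]
  have h2 : spectralRadius ℂ Q' ≤ ENNReal.ofReal rQ := by
    refine iSup₂_le fun μ hμ => ?_
    have hb : ‖μ‖ ≤ rQ := hgQ.2 ⟨μ, hμ, rfl⟩
    rw [← ENNReal.ofReal_coe_nnreal, coe_nnnorm]
    exact ENNReal.ofReal_le_ofReal hb
  have h3 : ENNReal.ofReal rP ≤ ENNReal.ofReal rQ :=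
    h1.trans (hsr.trans h2)
  have hrQ0 : 0 ≤ rQ := hrQe ▸ norm_nonneg μQ
  exact (ENNReal.ofReal_le_ofReal_iff hrQ0).mp h3
end
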